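/- arXiv:1304.1383 — 4 statements merged into one kernel-verified Lean document; each statement's English description precedes it below -/
import Mathlib

section
/- For every integer n ≥ 2 and every real b with |b| ≠ 1, the n×n matrix Λ(b) with entries b^{|i-j|} is invertible, and its inverse is the symmetric tridiagonal matrix with diagonal (1, 1+b², …, 1+b², 1)/(1-b²) and off-diagonal entries -b/(1-b²). -/
lemma aux_sum (n k : ℕ) (hk : k < n) (A B : ℝ) (f : ℕ → ℝ) :
    ∑ j ∈ Finset.range n, f j * (if j = k then A else if ((j:ℤ) - (k:ℤ)).natAbs = 1 then B else 0)
    = f k * A + (if 1 ≤ k then f (k-1) * B else 0) + (if k+1 < n then f (k+1) * B else 0) := by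
  have h : ∀ j ∈ Finset.range n, f j * (if j = k then A else if ((j:ℤ) - (k:ℤ)).natAbs = 1 then B else 0)
      = (if j = k then f j * A else 0) + ((if 1 ≤ k ∧ j = k - 1 then f j * B else 0)
        + (if j = k + 1 then f j * B else 0)) := by
    intro j _
    by_cases h1 : j = k
    · subst h1
      have h2 : ¬(1 ≤ j ∧ j = j - 1) := by omega
      have h3 : ¬(j = j + 1) := by omega
      simp [h2, h3]
    · by_cases h2 : ((j:ℤ) - (k:ℤ)).natAbs = 1
      · have h4 : (1 ≤ k ∧ j = k - 1) ∨ j = k + 1 := by omega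
        rcases h4 with h4 | h4
        · have h5 : ¬(j = k+1) := by omega
          have h6 : ¬(k - 1 = k) := by omega
          simp [h1, h2, h4, h5, h6]
        · have h5 : ¬(1 ≤ k ∧ j = k - 1) := by omega
          have h6 : ¬(k + 1 = k - 1) := by omega
          have h7 : ¬(k + 1 = k) := by omega
          simp [h1, h2, h4, h5, h6, h7]
      · have h4 : ¬(1 ≤ k ∧ j = k-1) := by omega
        have h5 : ¬(j = k+1) := by omega
        simp [h1, h2, h4, h5]
  rw [Finset.sum_congr rfl h, Finset.sum_add_distrib, Finset.sum_add_distrib, add_assoc]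
  congr 1
  · rw [Finset.sum_ite_eq' (Finset.range n) k (fun j => f j * A)]
    simp [Finset.mem_range.mpr hk]
  congr 1
  · by_cases hk1 : 1 ≤ k
    · simp only [hk1, true_and, if_pos]
      rw [Finset.sum_ite_eq' (Finset.range n) (k-1) (fun j => f j * B)]
      have : k - 1 ∈ Finset.range n := by simp; omega
      simp [this]
    · simp [hk1]
  · rw [Finset.sum_ite_eq' (Finset.range n) (k+1) (fun j => f j * B)]
    by_cases h : k + 1 < n <;> simp [Finset.mem_range, h]

lemma key_sum (n : ℕ) (hn : 2 ≤ n) (b : ℝ) (hb2 : (1:ℝ) - b^2 ≠ 0) (i k : ℕ) (hi : i < n) (hk : k < n) :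
    ∑ j ∈ Finset.range n, b ^ (((i:ℤ)-(j:ℤ)).natAbs) *
      ((if j = k then (if k = 0 ∨ k = n-1 then 1 else 1+b^2)
        else if ((j:ℤ)-(k:ℤ)).natAbs = 1 then -b else 0) / (1-b^2))
    = if i = k then 1 else 0 := by
  have hrw : ∀ j ∈ Finset.range n, b ^ (((i:ℤ)-(j:ℤ)).natAbs) *
      ((if j = k then (if k = 0 ∨ k = n-1 then 1 else 1+b^2)
        else if ((j:ℤ)-(k:ℤ)).natAbs = 1 then -b else 0) / (1-b^2))
      = (fun j : ℕ => b ^ (((i:ℤ)-(j:ℤ)).natAbs)) j *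
        (if j = k then (if k = 0 ∨ k = n-1 then (1:ℝ) else 1+b^2)
        else if ((j:ℤ)-(k:ℤ)).natAbs = 1 then -b else 0) / (1-b^2) := by
    intro j _
    rw [mul_div_assoc]
  rw [Finset.sum_congr rfl hrw, ← Finset.sum_div, aux_sum n k hk _ _ _, div_eq_iff hb2]
  rcases Nat.lt_trichotomy i k with hik | hik | hik
  · -- i < k
    have hne : ¬(i = k) := by omega
    have hk1 : 1 ≤ k := by omega
    obtain ⟨e, he⟩ : ∃ e, k - i = e + 1 := ⟨k - i - 1, by omega⟩
    have e1 : ((i:ℤ) - (k:ℤ)).natAbs = e + 1 := by omega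
    have e2 : ((i:ℤ) - ((k-1:ℕ):ℤ)).natAbs = e := by omega
    by_cases hkn : k = n - 1
    · have hnr : ¬(k + 1 < n) := by omega
      rw [if_pos (Or.inr hkn), if_pos hk1, if_neg hnr, if_neg hne, e1, e2]
      ring
    · have hnr : k + 1 < n := by omega
      have e3 : ((i:ℤ) - ((k+1:ℕ):ℤ)).natAbs = e + 2 := by omega
      rw [if_neg (by omega : ¬(k = 0 ∨ k = n-1)), if_pos hk1, if_pos hnr, if_neg hne, e1, e2, e3]
      ring
  · subst hik
    have e1 : ((i:ℤ) - (i:ℤ)).natAbs = 0 := by omega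
    by_cases hk0 : i = 0
    · have hnr : i + 1 < n := by omega
      have e3 : ((i:ℤ) - ((i+1:ℕ):ℤ)).natAbs = 1 := by omega
      rw [if_pos (Or.inl hk0), if_neg (by omega : ¬(1 ≤ i)), if_pos hnr, if_pos rfl, e1, e3]
      ring
    · by_cases hkn : i = n - 1
      · have e2 : ((i:ℤ) - ((i-1:ℕ):ℤ)).natAbs = 1 := by omega
        rw [if_pos (Or.inr hkn), if_pos (by omega : 1 ≤ i), if_neg (by omega : ¬(i + 1 < n)),
          if_pos rfl, e1, e2]
        ring
      · have e2 : ((i:ℤ) - ((i-1:ℕ):ℤ)).natAbs = 1 := by omega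
        have e3 : ((i:ℤ) - ((i+1:ℕ):ℤ)).natAbs = 1 := by omega
        rw [if_neg (by omega : ¬(i = 0 ∨ i = n-1)), if_pos (by omega : 1 ≤ i),
          if_pos (by omega : i + 1 < n), if_pos rfl, e1, e2, e3]
        ring
  · -- i > k
    have hne : ¬(i = k) := by omega
    have hnr : k + 1 < n := by omega
    obtain ⟨e, he⟩ : ∃ e, i - k = e + 1 := ⟨i - k - 1, by omega⟩
    have e1 : ((i:ℤ) - (k:ℤ)).natAbs = e + 1 := by omega
    have e3 : ((i:ℤ) - ((k+1:ℕ):ℤ)).natAbs = e := by omega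
    by_cases hk0 : k = 0
    · rw [if_pos (Or.inl hk0), if_neg (by omega : ¬(1 ≤ k)), if_pos hnr, if_neg hne, e1, e3]
      ring
    · have e2 : ((i:ℤ) - ((k-1:ℕ):ℤ)).natAbs = e + 2 := by omega
      rw [if_neg (by omega : ¬(k = 0 ∨ k = n-1)), if_pos (by omega : 1 ≤ k), if_pos hnr,
        if_neg hne, e1, e2, e3]
      ring

/-- For |b| ≠ 1 the matrix Λ(b) = (b^{|i-j|}) is invertible and its inverse is the
symmetric tridiagonal matrix with diagonal (1,1+b²,…,1+b²,1)/(1-b²) and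
off-diagonal entries -b/(1-b²). -/
theorem stmt2 (n : ℕ) (hn : 2 ≤ n) (b : ℝ) (hb : |b| ≠ 1) :
    IsUnit (Matrix.of fun i j : Fin n => b ^ ((i : ℤ) - (j : ℤ)).natAbs) ∧
    (Matrix.of fun i j : Fin n => b ^ ((i : ℤ) - (j : ℤ)).natAbs)⁻¹ =
      Matrix.of (fun i j : Fin n =>
        if i = j then
          (if (i : ℕ) = 0 ∨ (i : ℕ) = n - 1 then 1 else 1 + b ^ 2) / (1 - b ^ 2)
        else if ((i : ℤ) - (j : ℤ)).natAbs = 1 then -b / (1 - b ^ 2) else 0) := by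
  have hb2 : (1:ℝ) - b^2 ≠ 0 := by
    intro h
    have h1 : (|b| - 1) * (|b| + 1) = 0 := by nlinarith [sq_abs b]
    rcases mul_eq_zero.1 h1 with h2 | h2
    · exact hb (by linarith)
    · nlinarith [abs_nonneg b]
  have hmul : (Matrix.of fun i j : Fin n => b ^ ((i : ℤ) - (j : ℤ)).natAbs) *
      Matrix.of (fun i j : Fin n =>
        if i = j then
          (if (i : ℕ) = 0 ∨ (i : ℕ) = n - 1 then 1 else 1 + b ^ 2) / (1 - b ^ 2)
        else if ((i : ℤ) - (j : ℤ)).natAbs = 1 then -b / (1 - b ^ 2) else 0) = 1 := by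
    ext i k
    rw [Matrix.mul_apply, Matrix.one_apply]
    have hpt : ∀ j : Fin n,
        (Matrix.of fun i j : Fin n => b ^ ((i : ℤ) - (j : ℤ)).natAbs) i j *
        (Matrix.of (fun i j : Fin n =>
          if i = j then
            (if (i : ℕ) = 0 ∨ (i : ℕ) = n - 1 then 1 else 1 + b ^ 2) / (1 - b ^ 2)
          else if ((i : ℤ) - (j : ℤ)).natAbs = 1 then -b / (1 - b ^ 2) else 0)) j k =
        (fun m : ℕ => b ^ ((((i:ℕ):ℤ) - ((m:ℕ):ℤ)).natAbs) *
          ((if m = (k:ℕ) then (if (k:ℕ) = 0 ∨ (k:ℕ) = n-1 then (1:ℝ) else 1+b^2)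
            else if ((m:ℤ) - (((k:ℕ)):ℤ)).natAbs = 1 then -b else 0) / (1-b^2))) (j : ℕ) := by
      intro j
      simp only [Matrix.of_apply]
      by_cases hjk : j = k
      · subst hjk
        rw [if_pos rfl, if_pos rfl]
      · rw [if_neg hjk, if_neg (fun h => hjk (Fin.ext h))]
        by_cases h2 : ((j:ℤ) - (k:ℤ)).natAbs = 1
        · rw [if_pos h2, if_pos h2]
        · rw [if_neg h2, if_neg h2]
          simp
    rw [Finset.sum_congr rfl (fun j _ => hpt j)]
    rw [Fin.sum_univ_eq_sum_range (fun m : ℕ => b ^ ((((i:ℕ):ℤ) - ((m:ℕ):ℤ)).natAbs) *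
          ((if m = (k:ℕ) then (if (k:ℕ) = 0 ∨ (k:ℕ) = n-1 then (1:ℝ) else 1+b^2)
            else if ((m:ℤ) - (((k:ℕ)):ℤ)).natAbs = 1 then -b else 0) / (1-b^2))) n,
      key_sum n hn b hb2 (i:ℕ) (k:ℕ) i.isLt k.isLt]
    simp [Fin.ext_iff]
  exact ⟨(Matrix.isUnit_iff_isUnit_det _).mpr (Matrix.isUnit_det_of_right_inverse hmul),
    Matrix.inv_eq_right_inv hmul⟩
end

section
/- For every integer n ≥ 2 and every real b with |b| > 1, the n×n symmetric matrix Λ(b) with entries b^{|i-j|} is indefinite, i.e., it has at least one positive and at least one negative eigenvalue. -/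
/-!
The trace of `Λ(b)` is `n > 0`, so some eigenvalue is positive. On the vector `e₀ - b e₁` its
quadratic form is `1 - 2b² + b² = 1 - b² < 0`, so `Λ(b)` is not positive semidefinite and some
eigenvalue is negative.
-/

open Matrix
open scoped ComplexOrder

namespace Matrix.IsHermitian

variable {𝕜 n : Type*} [RCLike 𝕜] [Fintype n] [DecidableEq n] {A : Matrix n n 𝕜}

theorem exists_eigenvalues_neg_of_dotProduct_mulVec_neg (hA : A.IsHermitian) {x : n → 𝕜}
    (hx : star x ⬝ᵥ (A *ᵥ x) < 0) : ∃ i, hA.eigenvalues i < 0 := by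
  by_contra! h
  exact ((hA.posSemidef_iff_eigenvalues_nonneg.mpr h).dotProduct_mulVec_nonneg x).not_gt hx

theorem exists_eigenvalues_pos_of_trace_pos (hA : A.IsHermitian) (htr : 0 < A.trace) :
    ∃ i, 0 < hA.eigenvalues i := by
  by_contra! h
  rw [hA.trace_eq_sum_eigenvalues, ← RCLike.ofReal_sum, RCLike.ofReal_pos] at htr
  exact (Finset.sum_nonpos fun i _ => h i).not_gt htr

end Matrix.IsHermitian

theorem Matrix.dotProduct_mulVec_single_add_single {R n : Type*} [CommSemiring R] [Fintype n]
    [DecidableEq n] (A : Matrix n n R) (i j : n) (a c : R) :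
    (Pi.single i a + Pi.single j c) ⬝ᵥ (A *ᵥ (Pi.single i a + Pi.single j c)) =
      a * a * A i i + a * c * A i j + c * a * A j i + c * c * A j j := by
  simp only [mulVec_add, mulVec_single, dotProduct_add, add_dotProduct, single_dotProduct,
    Pi.smul_apply, MulOpposite.smul_eq_mul_unop, MulOpposite.unop_op, col_apply]
  ring

/-- The matrix `Λ(b)` of the paper. -/
def powToeplitz {R : Type*} [Monoid R] (n : ℕ) (b : R) : Matrix (Fin n) (Fin n) R :=
  of fun i j => b ^ ((i : ℤ) - (j : ℤ)).natAbs

namespace powToeplitz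

variable {R : Type*} {n : ℕ}

theorem isSymm [Monoid R] (b : R) : (powToeplitz n b).IsSymm := by
  refine IsSymm.ext fun i j => ?_
  simp only [powToeplitz, of_apply]
  rw [← Int.natAbs_neg, neg_sub]

theorem trace [Semiring R] (b : R) : (powToeplitz n b).trace = n := by
  simp [Matrix.trace, powToeplitz]

theorem apply_of_val_eq [Monoid R] (b : R) {i j : Fin n} {k : ℕ}
    (h : (i : ℕ) = j + k ∨ (j : ℕ) = i + k) : powToeplitz n b i j = b ^ k := by
  simp only [powToeplitz, of_apply]
  congr 1
  omega

theorem exists_dotProduct_mulVec_eq [CommRing R] (hn : 2 ≤ n) (b : R) :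
    ∃ x : Fin n → R, x ⬝ᵥ (powToeplitz n b *ᵥ x) = 1 - b ^ 2 := by
  let i₀ : Fin n := ⟨0, by omega⟩
  let i₁ : Fin n := ⟨1, by omega⟩
  refine ⟨Pi.single i₀ 1 + Pi.single i₁ (-b), ?_⟩
  rw [dotProduct_mulVec_single_add_single,
    apply_of_val_eq b (k := 0) (by simp), apply_of_val_eq b (k := 1) (by simp [i₀, i₁]),
    apply_of_val_eq b (k := 1) (by simp [i₀, i₁]), apply_of_val_eq b (k := 0) (by simp)]
  ring

end powToeplitz

/-- For |b| > 1 and n ≥ 2, the symmetric matrix Λ(b) = (b^{|i-j|}) is indefinite: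
it has at least one positive and at least one negative eigenvalue. -/
theorem stmt4 (n : ℕ) (hn : 2 ≤ n) (b : ℝ) (hb : 1 < |b|) :
    ∃ hH : (Matrix.of fun i j : Fin n => b ^ ((i : ℤ) - (j : ℤ)).natAbs).IsHermitian,
      (∃ i, 0 < hH.eigenvalues i) ∧ (∃ j, hH.eigenvalues j < 0) := by
  have hH : (powToeplitz n b).IsHermitian := isHermitian_iff_isSymm.mpr (powToeplitz.isSymm b)
  refine ⟨hH, hH.exists_eigenvalues_pos_of_trace_pos ?_, ?_⟩
  · rw [powToeplitz.trace]
    exact_mod_cast (by omega : 0 < n)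
  · obtain ⟨x, hx⟩ := powToeplitz.exists_dotProduct_mulVec_eq hn b
    refine hH.exists_eigenvalues_neg_of_dotProduct_mulVec_neg (x := x) ?_
    rw [star_trivial, hx, sub_neg, ← sq_abs]
    exact one_lt_pow₀ hb two_ne_zero
end

section
/- Let n ≥ 2 and let A be the (n+1)×(n+1) real matrix in block form A = [[M, e₊],[e₊′, 0]], where M is the n×n matrix with (i,j)-th entry |i-j| and e₊ ∈ ℝⁿ is the vector of ones. Then A is nonsingular. -/
private lemma sum_ind {N : ℕ} (m : ℕ) (hm : m < N) (g : Fin N → ℝ) :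
    (∑ k : Fin N, (if (k : ℕ) = m then (1 : ℝ) else 0) * g k) = g ⟨m, hm⟩ := by
  rw [Finset.sum_eq_single ⟨m, hm⟩]
  · simp
  · intro k _ hk
    rw [if_neg, zero_mul]
    exact fun h => hk (Fin.ext h)
  · simp

/-- The bordered matrix A = [[M, e₊],[e₊′, 0]] with M = (|i-j|) is nonsingular. -/
theorem stmt9 (n : ℕ) (hn : 2 ≤ n) :
    (Matrix.of fun i j : Fin (n + 1) =>
        if (i : ℕ) < n then
          (if (j : ℕ) < n then ((((i : ℕ) : ℤ) - ((j : ℕ) : ℤ)).natAbs : ℝ) else 1)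
        else (if (j : ℕ) < n then (1 : ℝ) else 0)).det ≠ 0 := by
  set A : Matrix (Fin (n + 1)) (Fin (n + 1)) ℝ :=
    Matrix.of fun i j : Fin (n + 1) =>
      if (i : ℕ) < n then
        (if (j : ℕ) < n then ((((i : ℕ) : ℤ) - ((j : ℕ) : ℤ)).natAbs : ℝ) else 1)
      else (if (j : ℕ) < n then (1 : ℝ) else 0) with hA
  set B : Matrix (Fin (n + 1)) (Fin (n + 1)) ℝ :=
    Matrix.of fun i k : Fin (n + 1) =>
      if (i : ℕ) = 0 then
        (-(1/2)) * (if (k : ℕ) = 0 then (1:ℝ) else 0)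
          + (1/2) * (if (k : ℕ) = 1 then (1:ℝ) else 0)
          + (1/2) * (if (k : ℕ) = n then (1:ℝ) else 0)
      else if (i : ℕ) = n - 1 then
        (1/2) * (if (k : ℕ) = n - 2 then (1:ℝ) else 0)
          + (-(1/2)) * (if (k : ℕ) = n - 1 then (1:ℝ) else 0)
          + (1/2) * (if (k : ℕ) = n then (1:ℝ) else 0)
      else if (i : ℕ) < n then
        (1/2) * (if (k : ℕ) = (i : ℕ) - 1 then (1:ℝ) else 0)
          + (-1) * (if (k : ℕ) = (i : ℕ) then (1:ℝ) else 0)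
          + (1/2) * (if (k : ℕ) = (i : ℕ) + 1 then (1:ℝ) else 0)
      else
        (1/2) * (if (k : ℕ) = 0 then (1:ℝ) else 0)
          + (1/2) * (if (k : ℕ) = n - 1 then (1:ℝ) else 0)
          + (-((n:ℝ) - 1)/2) * (if (k : ℕ) = n then (1:ℝ) else 0) with hB
  have hBA : B * A = 1 := by
    ext i j
    rw [Matrix.mul_apply, Matrix.one_apply]
    have hjlt : (j : ℕ) < n + 1 := j.isLt
    have hilt : (i : ℕ) < n + 1 := i.isLt
    simp only [hB, hA, Matrix.of_apply]
    by_cases hi0 : (i : ℕ) = 0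
    · -- first row: -1/2, 1/2 at index 1, 1/2 at index n
      simp only [hi0, reduceIte]
      simp only [add_mul, mul_assoc]
      rw [Finset.sum_add_distrib, Finset.sum_add_distrib,
        ← Finset.mul_sum, ← Finset.mul_sum, ← Finset.mul_sum,
        sum_ind 0 (by omega) _, sum_ind 1 (by omega) _, sum_ind n (by omega) _]
      simp only [Matrix.of_apply, Fin.ext_iff, hi0]
      rcases Nat.lt_or_ge (j:ℕ) n with hjn | hjn
      · rw [if_pos (show (0:ℕ) < n by omega), if_pos hjn, if_pos (show (1:ℕ) < n by omega),
          if_pos hjn, if_neg (lt_irrefl n), if_pos hjn]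
        simp only [Nat.cast_zero, Nat.cast_one]
        by_cases hj0 : (j:ℕ) = 0
        · rw [if_pos hj0.symm]
          have e1 : ((0:ℤ) - ((j:ℕ):ℤ)).natAbs = 0 := by omega
          have e2 : ((1:ℤ) - ((j:ℕ):ℤ)).natAbs = 1 := by omega
          rw [e1, e2]; norm_num
        · rw [if_neg (fun h => hj0 h.symm)]
          have e1 : ((0:ℤ) - ((j:ℕ):ℤ)).natAbs = (j:ℕ) := by omega
          have e2 : ((1:ℤ) - ((j:ℕ):ℤ)).natAbs + 1 = (j:ℕ) := by omega
          have e1' := congrArg (Nat.cast : ℕ → ℝ) e1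
          have e2' := congrArg (Nat.cast : ℕ → ℝ) e2
          push_cast at e1' e2'
          rw [e1']
          linarith
      · rw [if_pos (show (0:ℕ) < n by omega), if_neg (by omega), if_pos (show (1:ℕ) < n by omega),
          if_neg (by omega), if_neg (lt_irrefl n), if_neg (by omega), if_neg (by omega)]
        norm_num
    · by_cases hi1 : (i : ℕ) = n - 1
      · -- row n-1: 1/2 at n-2, -1/2 at n-1, 1/2 at n
        simp only [if_neg hi0]
        simp only [hi1, reduceIte]
        simp only [add_mul, mul_assoc]
        rw [Finset.sum_add_distrib, Finset.sum_add_distrib,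
          ← Finset.mul_sum, ← Finset.mul_sum, ← Finset.mul_sum,
          sum_ind (n-2) (by omega) _, sum_ind (n-1) (by omega) _, sum_ind n (by omega) _]
        simp only [Matrix.of_apply, Fin.ext_iff, hi1]
        rcases Nat.lt_or_ge (j:ℕ) n with hjn | hjn
        · rw [if_pos (show n - 2 < n by omega), if_pos hjn, if_pos (show n - 1 < n by omega),
            if_pos hjn, if_neg (lt_irrefl n), if_pos hjn]
          by_cases hj1 : (j:ℕ) = n - 1
          · rw [if_pos hj1.symm]
            have e1 : (((n-2:ℕ):ℤ) - ((j:ℕ):ℤ)).natAbs = 1 := by omega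
            have e2 : (((n-1:ℕ):ℤ) - ((j:ℕ):ℤ)).natAbs = 0 := by omega
            rw [e1, e2]; norm_num
          · rw [if_neg (fun h => hj1 h.symm)]
            have e1 : (((n-1:ℕ):ℤ) - ((j:ℕ):ℤ)).natAbs = (((n-2:ℕ):ℤ) - ((j:ℕ):ℤ)).natAbs + 1 := by
              omega
            have e1' := congrArg (Nat.cast : ℕ → ℝ) e1
            push_cast at e1'
            rw [e1']
            linarith
        · rw [if_pos (show n - 2 < n by omega), if_neg (by omega), if_pos (show n - 1 < n by omega),
            if_neg (by omega), if_neg (lt_irrefl n), if_neg (by omega), if_neg (by omega)]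
          norm_num
      · by_cases hin : (i : ℕ) < n
        · -- interior row: 1/2 at i-1, -1 at i, 1/2 at i+1
          simp only [if_neg hi0, if_neg hi1, if_pos hin]
          simp only [add_mul, mul_assoc]
          rw [Finset.sum_add_distrib, Finset.sum_add_distrib,
            ← Finset.mul_sum, ← Finset.mul_sum, ← Finset.mul_sum,
            sum_ind ((i:ℕ)-1) (by omega) _, sum_ind (i:ℕ) (by omega) _,
            sum_ind ((i:ℕ)+1) (by omega) _]
          simp only [Matrix.of_apply, Fin.ext_iff]
          rcases Nat.lt_or_ge (j:ℕ) n with hjn | hjn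
          · rw [if_pos (show (i:ℕ) - 1 < n by omega), if_pos hjn, if_pos hin, if_pos hjn,
              if_pos (show (i:ℕ) + 1 < n by omega), if_pos hjn]
            by_cases hij : (i:ℕ) = (j:ℕ)
            · rw [if_pos hij]
              have e1 : ((((i:ℕ)-1:ℕ):ℤ) - ((j:ℕ):ℤ)).natAbs = 1 := by omega
              have e2 : (((i:ℕ):ℤ) - ((j:ℕ):ℤ)).natAbs = 0 := by omega
              have e3 : ((((i:ℕ)+1:ℕ):ℤ) - ((j:ℕ):ℤ)).natAbs = 1 := by omega
              rw [e1, e2, e3]; norm_num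
            · rw [if_neg hij]
              have e1 : ((((i:ℕ)-1:ℕ):ℤ) - ((j:ℕ):ℤ)).natAbs
                  + ((((i:ℕ)+1:ℕ):ℤ) - ((j:ℕ):ℤ)).natAbs
                  = 2 * ((((i:ℕ)):ℤ) - ((j:ℕ):ℤ)).natAbs := by omega
              have e1' := congrArg (Nat.cast : ℕ → ℝ) e1
              push_cast at e1' ⊢
              linarith
          · rw [if_pos (show (i:ℕ) - 1 < n by omega), if_neg (by omega), if_pos hin,
              if_neg (by omega), if_pos (show (i:ℕ) + 1 < n by omega), if_neg (by omega),
              if_neg (by omega)]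
            norm_num
        · -- last row: 1/2 at 0, 1/2 at n-1, -(n-1)/2 at n
          simp only [if_neg hi0, if_neg hi1, if_neg hin]
          simp only [add_mul, mul_assoc]
          rw [Finset.sum_add_distrib, Finset.sum_add_distrib,
            ← Finset.mul_sum, ← Finset.mul_sum, ← Finset.mul_sum,
            sum_ind 0 (by omega) _, sum_ind (n-1) (by omega) _, sum_ind n (by omega) _]
          have hin' : (i:ℕ) = n := by omega
          simp only [Matrix.of_apply, Fin.ext_iff, hin']
          rcases Nat.lt_or_ge (j:ℕ) n with hjn | hjn
          · rw [if_pos (show (0:ℕ) < n by omega), if_pos hjn, if_pos (show n - 1 < n by omega),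
              if_pos hjn, if_neg (lt_irrefl n), if_pos hjn, if_neg (by omega)]
            simp only [Nat.cast_zero]
            have e1 : ((0:ℤ) - ((j:ℕ):ℤ)).natAbs = (j:ℕ) := by omega
            have e2 : (((n-1:ℕ):ℤ) - ((j:ℕ):ℤ)).natAbs + (j:ℕ) + 1 = n := by omega
            have e1' := congrArg (Nat.cast : ℕ → ℝ) e1
            have e2' := congrArg (Nat.cast : ℕ → ℝ) e2
            push_cast at e1' e2'
            rw [e1']
            linarith
          · rw [if_pos (show (0:ℕ) < n by omega), if_neg (by omega),
              if_pos (show n - 1 < n by omega), if_neg (by omega), if_neg (lt_irrefl n),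
              if_neg (by omega), if_pos (by omega)]
            norm_num
  exact IsUnit.ne_zero (Matrix.isUnit_det_of_left_inverse hBA)
end

section
/- Let N be an affine subspace of ℝⁿ, let ν* ∈ N, and for y ∈ ℝⁿ define h(y) = ⟨Π(y - ν*)/‖Π(y - ν*)‖⟩ where Π is the orthogonal projection onto the orthogonal complement of N - ν*, ⟨x⟩ denotes ±x normalized so that the first nonzero coordinate of ⟨x⟩ is positive (with ⟨0⟩ = 0), and x/‖x‖ := 0 when x = 0. Then h is a maximal invariant for the group G(N) of transformations y ↦ α(y - ν) + ν' (α ≠ 0, ν, ν' ∈ N): h(g(y)) = h(y) for all g ∈ G(N) and all y, and h(y) = h(y') implies y' = g(y) for some g ∈ G(N). Moreover h does not depend on the choice of ν* ∈ N. -/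
/-!
The projection Π is linear with kernel `N - ν*`, so `h(y)` only depends on `Π(y - ν*)`, and the
transformation `y ↦ α(y - ν) + ν'` multiplies `Π(y - ν*)` by `α`. The map `x ↦ ⟨x/‖x‖⟩` identifies
two vectors exactly when one is a nonzero multiple of the other, which gives invariance; conversely,
if `Π(y' - ν*) = c Π(y - ν*)` then `y' - c(y - ν*) ∈ N`, which gives maximality.
-/

open Finset

/-- ⟨x⟩: ±x with the sign chosen so that the first nonzero coordinate is positive,
and ⟨0⟩ = 0. -/
noncomputable def brak {n : ℕ} (x : EuclideanSpace ℝ (Fin n)) :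
    EuclideanSpace ℝ (Fin n) := by
  classical
  exact
    if h : ∃ i, x i ≠ 0 then
      (if 0 < x ((Finset.univ.filter fun i => x i ≠ 0).min' (by
          obtain ⟨i, hi⟩ := h
          exact ⟨i, by simp [hi]⟩)) then x else -x)
    else 0

section Direction

variable {n : ℕ}

lemma brak_eq_or_eq_neg (x : EuclideanSpace ℝ (Fin n)) : brak x = x ∨ brak x = -x := by
  unfold brak
  split_ifs with h
  · exact .inl rfl
  · exact .inr rfl
  · push Not at h
    exact .inl (by ext i; simp [h i])

lemma brak_neg (x : EuclideanSpace ℝ (Fin n)) : brak (-x) = brak x := by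
  unfold brak
  simp only [PiLp.neg_apply, ne_eq, neg_eq_zero, Left.neg_pos_iff]
  split_ifs with h hneg hpos hpos
  · exact absurd hpos (lt_asymm hneg)
  · rfl
  · exact neg_neg x
  · have hmin := Finset.min'_mem {i | ¬x.ofLp i = 0} ⟨h.choose, by simpa using h.choose_spec⟩
    exact ((Finset.mem_filter.1 hmin).2 (le_antisymm (not_lt.1 hpos) (not_lt.1 hneg))).elim
  · rfl

lemma brak_eq_brak_iff {x y : EuclideanSpace ℝ (Fin n)} : brak x = brak y ↔ x = y ∨ x = -y := by
  refine ⟨fun h => ?_, ?_⟩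
  · rcases brak_eq_or_eq_neg x with hx | hx <;> rcases brak_eq_or_eq_neg y with hy | hy
    · exact .inl (hx.symm.trans (h.trans hy))
    · exact .inr (hx.symm.trans (h.trans hy))
    · exact .inr (neg_eq_iff_eq_neg.1 (hx.symm.trans (h.trans hy)))
    · exact .inl (neg_inj.1 (hx.symm.trans (h.trans hy)))
  · rintro (rfl | rfl)
    · rfl
    · exact brak_neg y

section Normalize

variable {E : Type*} [NormedAddCommGroup E] [NormedSpace ℝ E]

lemma inv_norm_smul_smul_eq_or_eq_neg {α : ℝ} (hα : α ≠ 0) (u : E) :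
    ‖α • u‖⁻¹ • α • u = ‖u‖⁻¹ • u ∨ ‖α • u‖⁻¹ • α • u = -(‖u‖⁻¹ • u) := by
  rw [norm_smul, Real.norm_eq_abs, smul_smul, mul_inv, mul_right_comm, ← neg_smul]
  rcases hα.lt_or_gt with hneg | hpos
  · rw [abs_of_neg hneg, inv_neg, neg_mul, inv_mul_cancel₀ hα]
    exact .inr (by simp)
  · rw [abs_of_pos hpos, inv_mul_cancel₀ hα]
    exact .inl (by simp)

lemma exists_smul_eq_of_inv_norm_smul_eq_smul {u v : E} {ε : ℝ} (hε : ε ≠ 0)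
    (h : ‖u‖⁻¹ • u = ε • ‖v‖⁻¹ • v) : ∃ c ≠ (0 : ℝ), v = c • u := by
  by_cases hv : v = 0
  · refine ⟨1, one_ne_zero, ?_⟩
    simp_all
  · have hu : u ≠ 0 := by
      rintro rfl
      simp [eq_comm (a := (0 : E)), hε, hv] at h
    refine ⟨‖v‖ * ε⁻¹ * ‖u‖⁻¹, by simp [hu, hv, hε], ?_⟩
    rw [mul_smul, mul_smul, h, smul_smul ε⁻¹, inv_mul_cancel₀ hε, one_smul, smul_smul,
      mul_inv_cancel₀ (norm_ne_zero_iff.2 hv), one_smul]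

end Normalize

noncomputable def unsignedDirection (x : EuclideanSpace ℝ (Fin n)) : EuclideanSpace ℝ (Fin n) :=
  brak (‖x‖⁻¹ • x)

lemma unsignedDirection_eq_iff {x y : EuclideanSpace ℝ (Fin n)} :
    unsignedDirection x = unsignedDirection y ↔ ∃ c ≠ (0 : ℝ), y = c • x := by
  refine ⟨fun h => ?_, ?_⟩
  · rcases brak_eq_brak_iff.1 h with h | h
    · exact exists_smul_eq_of_inv_norm_smul_eq_smul one_ne_zero (by rw [h, one_smul])
    · exact exists_smul_eq_of_inv_norm_smul_eq_smul (neg_ne_zero.2 one_ne_zero)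
        (by rw [h, neg_one_smul])
  · rintro ⟨c, hc, rfl⟩
    exact (brak_eq_brak_iff.2 (inv_norm_smul_smul_eq_or_eq_neg hc x)).symm

section Fibre

variable {E : Type*} [AddCommGroup E] [Module ℝ E] (f : E →ₗ[ℝ] EuclideanSpace ℝ (Fin n))
  {ν₀ ν₁ ν₂ : E}

lemma unsignedDirection_map_smul_sub_add {α : ℝ} (hα : α ≠ 0) (h₁ : f ν₁ = f ν₀)
    (h₂ : f ν₂ = f ν₀) (y : E) :
    unsignedDirection (f (α • (y - ν₁) + ν₂ - ν₀)) = unsignedDirection (f (y - ν₀)) := by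
  refine (unsignedDirection_eq_iff.2 ⟨α, hα, ?_⟩).symm
  rw [map_sub, map_add, map_smul, map_sub, map_sub, h₁, h₂, add_sub_cancel_right]

lemma exists_eq_smul_sub_add_of_unsignedDirection_eq {y y' : E}
    (h : unsignedDirection (f (y - ν₀)) = unsignedDirection (f (y' - ν₀))) :
    ∃ α ≠ (0 : ℝ), ∃ ν₂, f ν₂ = f ν₀ ∧ y' = α • (y - ν₀) + ν₂ := by
  obtain ⟨α, hα, hf⟩ := unsignedDirection_eq_iff.1 h
  refine ⟨α, hα, y' - α • (y - ν₀), ?_, by abel⟩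
  rw [map_sub, map_smul, ← hf, map_sub]
  abel

end Fibre

end Direction

lemma sub_mem_iff_starProjection_orthogonal_eq {E : Type*} [NormedAddCommGroup E]
    [InnerProductSpace ℝ E] (L : Submodule ℝ E) [L.HasOrthogonalProjection] (x y : E) :
    x - y ∈ L ↔ Lᗮ.starProjection x = Lᗮ.starProjection y := by
  rw [← sub_eq_zero, ← map_sub, Submodule.starProjection_apply_eq_zero_iff,
    Submodule.orthogonal_orthogonal]

/-- h(y) = ⟨Π(y - ν*)/‖Π(y - ν*)‖⟩, with Π the orthogonal projection onto the
orthogonal complement of N - ν*, is a maximal invariant for the group G(N), and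
does not depend on the choice of ν* ∈ N. -/
theorem stmt12 (n : ℕ) (L : Submodule ℝ (EuclideanSpace ℝ (Fin n)))
    (ν : EuclideanSpace ℝ (Fin n)) (N : Set (EuclideanSpace ℝ (Fin n)))
    (hN : N = {x | x - ν ∈ L}) (νs : EuclideanSpace ℝ (Fin n)) (hνs : νs ∈ N) :
    let P : EuclideanSpace ℝ (Fin n) → EuclideanSpace ℝ (Fin n) :=
      fun y => (Submodule.orthogonalProjectionOnto Lᗮ y : EuclideanSpace ℝ (Fin n))
    let h : EuclideanSpace ℝ (Fin n) → EuclideanSpace ℝ (Fin n) →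
        EuclideanSpace ℝ (Fin n) :=
      fun ν₀ y => brak (‖P (y - ν₀)‖⁻¹ • P (y - ν₀))
    (∀ α : ℝ, α ≠ 0 → ∀ ν₁ ∈ N, ∀ ν₂ ∈ N, ∀ y,
        h νs (α • (y - ν₁) + ν₂) = h νs y) ∧
    (∀ y y', h νs y = h νs y' →
        ∃ α : ℝ, α ≠ 0 ∧ ∃ ν₁ ∈ N, ∃ ν₂ ∈ N, y' = α • (y - ν₁) + ν₂) ∧
    (∀ ν₂ ∈ N, h ν₂ = h νs) := by
  intro P h
  let f : EuclideanSpace ℝ (Fin n) →ₗ[ℝ] EuclideanSpace ℝ (Fin n) := Lᗮ.starProjection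
  have hνs' : f νs = f ν :=
    (sub_mem_iff_starProjection_orthogonal_eq L νs ν).1 (by rwa [hN] at hνs)
  have hmem : ∀ x, x ∈ N ↔ f x = f νs := fun x => by
    rw [hN, Set.mem_ofPred_eq, sub_mem_iff_starProjection_orthogonal_eq, hνs']
    rfl
  refine ⟨fun α hα ν₁ hν₁ ν₂ hν₂ y => ?_, fun y y' hyy' => ?_, fun ν₂ hν₂ => funext fun y => ?_⟩
  · exact unsignedDirection_map_smul_sub_add f hα ((hmem ν₁).1 hν₁) ((hmem ν₂).1 hν₂) y
  · obtain ⟨α, hα, ν₂, hν₂, rfl⟩ := exists_eq_smul_sub_add_of_unsignedDirection_eq f hyy'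
    exact ⟨α, hα, νs, hνs, ν₂, (hmem ν₂).2 hν₂, rfl⟩
  · show unsignedDirection (f (y - ν₂)) = unsignedDirection (f (y - νs))
    rw [map_sub, map_sub, (hmem ν₂).1 hν₂]
end
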